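/- arXiv:2305.15140 — 4 statements merged into one kernel-verified Lean document; each statement's English description precedes it below -/
import Mathlib

section
/- For every natural number ℓ, the polynomial x^(2·3^ℓ) + x^(3^ℓ) + 1 is irreducible over the field with two elements F_2. -/
/-!
The polynomial is the cyclotomic polynomial `Φ_{3^(ℓ+1)}`. Over `𝔽_p` every irreducible factor
of `Φ_n` has degree the multiplicative order of `p` modulo `n`, so `Φ_n` is irreducible as soon as
`p` generates `(ℤ/n)ˣ`. Modulo `3^(ℓ+1)` we have `2 = -(1 - 3)`, where `1 - 3` has order `3^ℓ` and
`-1` has order `2`; hence `2` has order `2·3^ℓ = φ(3^(ℓ+1))`.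
-/

open Polynomial

theorem ZMod.orderOf_prime_sub_one {p : ℕ} (hp : p.Prime) (hp2 : p ≠ 2) (ℓ : ℕ) :
    orderOf ((p : ZMod (p ^ (ℓ + 1))) - 1) = 2 * p ^ ℓ := by
  have : Fact (1 < p ^ (ℓ + 1)) := ⟨Nat.one_lt_pow ℓ.succ_ne_zero hp.one_lt⟩
  have hp_odd : Odd p := hp.odd_of_ne_two hp2
  have h_one_sub : orderOf (1 + p * (-1 : ℤ) : ZMod (p ^ (ℓ + 1))) = p ^ ℓ :=
    ZMod.orderOf_one_add_mul_prime hp hp2 (-1) (fun h => hp.ne_one <| by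
      exact_mod_cast Int.eq_one_of_dvd_one (Int.natCast_nonneg p) (dvd_neg.mp h)) ℓ
  have h_neg_one : orderOf (-1 : ZMod (p ^ (ℓ + 1))) = 2 := by
    refine orderOf_neg_one.trans (if_neg ?_)
    rw [ZMod.ringChar_zmod_n]
    exact fun h => Nat.not_even_iff_odd.mpr (hp_odd.pow (n := ℓ + 1)) (h ▸ even_two)
  calc orderOf ((p : ZMod (p ^ (ℓ + 1))) - 1)
      = orderOf ((-1) * (1 + p * (-1 : ℤ)) : ZMod (p ^ (ℓ + 1))) := by push_cast; ring_nf
    _ = 2 * p ^ ℓ := by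
      rw [(Commute.all _ _).orderOf_mul_eq_mul_orderOf_of_coprime, h_neg_one, h_one_sub]
      rw [h_neg_one, h_one_sub]
      exact Nat.Coprime.pow_right _ (Nat.coprime_two_left.mpr hp_odd)

theorem ZMod.irreducible_cyclotomic_of_orderOf_eq_totient {p n : ℕ} [Fact p.Prime]
    (hpn : ¬p ∣ n) (h : orderOf (p : ZMod n) = n.totient) :
    Irreducible (cyclotomic n (ZMod p)) :=
  ZMod.irreducible_of_dvd_cyclotomic_of_natDegree hpn dvd_rfl <| by
    rw [natDegree_cyclotomic, ← orderOf_units, ZMod.coe_unitOfCoprime, h]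

theorem cyclotomic_three_pow_succ (R : Type*) [CommRing R] (ℓ : ℕ) :
    cyclotomic (3 ^ (ℓ + 1)) R = X ^ (2 * 3 ^ ℓ) + X ^ (3 ^ ℓ) + 1 := by
  rw [cyclotomic_prime_pow_eq_geom_sum Nat.prime_three, Finset.sum_range_succ,
    Finset.sum_range_succ, Finset.sum_range_one, ← pow_mul, mul_comm]
  ring

/-- For every natural number ℓ, the polynomial x^(2·3^ℓ) + x^(3^ℓ) + 1 is irreducible over F₂. -/
theorem stmt0 (ℓ : ℕ) :
    Irreducible (X ^ (2 * 3 ^ ℓ) + X ^ (3 ^ ℓ) + 1 : Polynomial (ZMod 2)) := by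
  rw [← cyclotomic_three_pow_succ]
  refine ZMod.irreducible_cyclotomic_of_orderOf_eq_totient ?_ ?_
  · exact fun h => absurd (Nat.prime_two.dvd_of_dvd_pow h) (by decide)
  · have h_order := ZMod.orderOf_prime_sub_one Nat.prime_three (by decide) ℓ
    rw [Nat.totient_prime_pow_succ Nat.prime_three]
    norm_num at h_order ⊢
    rw [h_order, mul_comm]
end

section
/- Let F be a field, and let b, a, d be positive integers with a > sqrt(2·d·b). Given b distinct pairs (x_i, y_i) in F × F, the number of polynomials g ∈ F[x] of degree at most d such that g(x_i) = y_i for at least a of the indices i is at most 2·b/a. -/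
/-!
Let `A g` be the set of indices at which `g` agrees with the data. Since the pairs are
distinct, two distinct polynomials of degree at most `d` agree simultaneously in at most `d`
indices (the first coordinates there are distinct roots of their difference). So the `A g`
form a family of subsets of a `b`-set, each of size at least `a`, with pairwise intersections
of size at most `d`. Truncated inclusion–exclusion for `L` members of such a family gives
`L a - (L choose 2) d ≤ b`; taking `L = ⌊2b/a⌋ + 1` and using `a² > 2db` this is impossible.
-/

open Polynomial Finset

theorem Finset.card_mul_le_card_biUnion_add_choose_two_mul {ι α : Type*} [DecidableEq α]
    {A : ι → Finset α} {a d : ℕ} (T : Finset ι) (hA : ∀ i ∈ T, a ≤ #(A i))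
    (hAA : (T : Set ι).Pairwise fun i j => #(A i ∩ A j) ≤ d) :
    #T * a ≤ #(T.biUnion A) + (#T).choose 2 * d := by
  classical
  induction T using Finset.induction_on with
  | empty => simp
  | @insert i T hiT ih =>
    have ih := ih (fun j hj => hA j (mem_insert_of_mem hj))
      (hAA.mono (by simp only [coe_insert, Set.subset_insert]))
    have hoverlap : #(A i ∩ T.biUnion A) ≤ #T * d := by
      rw [inter_biUnion]
      refine card_biUnion_le_card_mul _ _ _ fun j hj => hAA (by simp) (by simp [hj]) ?_
      rintro rfl
      exact hiT hj
    have hunion := card_union_add_card_inter (A i) (T.biUnion A)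
    have hAi := hA i (mem_insert_self i T)
    rw [card_insert_of_notMem hiT, biUnion_insert, Nat.choose_succ_succ, Nat.choose_one_right]
    nlinarith

theorem card_mul_le_two_mul_of_pairwise_card_inter_le {ι α : Type*} [DecidableEq α] [Fintype α]
    {A : ι → Finset α} {a d : ℕ}
    (hsq : 2 * d * Fintype.card α < a * a) (T : Finset ι) (hA : ∀ i ∈ T, a ≤ #(A i))
    (hAA : (T : Set ι).Pairwise fun i j => #(A i ∩ A j) ≤ d) :
    #T * a ≤ 2 * Fintype.card α := by
  set b := Fintype.card α
  have ha : 0 < a := Nat.pos_of_mul_pos_left (Nat.zero_lt_of_lt hsq)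
  set q := 2 * b / a
  have hqa : q * a ≤ 2 * b := Nat.div_mul_le_self _ _
  have hqa' : 2 * b < (q + 1) * a := (Nat.div_lt_iff_lt_mul ha).mp (Nat.lt_succ_self _)
  by_contra! hT
  obtain ⟨T', hT'T, hT'⟩ : ∃ T' ⊆ T, #T' = q + 1 :=
    exists_subset_card_eq (by nlinarith)
  have hbonf := Finset.card_mul_le_card_biUnion_add_choose_two_mul T'
    (fun i hi => hA i (hT'T hi)) (hAA.mono (by simpa using hT'T))
  have hb : #(T'.biUnion A) ≤ b := card_le_univ _
  have hchoose : (q + 1).choose 2 * 2 = (q + 1) * q := by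
    simpa using (Nat.add_one_mul_choose_eq q 1).symm
  have hqd : q * d < a := by
    refine Nat.lt_of_mul_lt_mul_right (a := a) ?_
    calc q * d * a = q * a * d := by ring
      _ ≤ 2 * b * d := Nat.mul_le_mul_right d hqa
      _ < a * a := by linarith
  rw [hT'] at hbonf
  -- `2 (q+1) a ≤ 2b + (q+1) q d < 2b + (q+1) a`, so `(q+1) a < 2b`.
  nlinarith

theorem ncard_mul_le_two_mul_of_pairwise_card_inter_le {ι α : Type*} [DecidableEq α]
    [Fintype α] {A : ι → Finset α} {a d : ℕ} (hsq : 2 * d * Fintype.card α < a * a)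
    {S : Set ι} (hA : ∀ i ∈ S, a ≤ #(A i)) (hAA : S.Pairwise fun i j => #(A i ∩ A j) ≤ d) :
    S.Finite ∧ S.ncard * a ≤ 2 * Fintype.card α := by
  classical
  have hfinset (T : Finset ι) (hT : ↑T ⊆ S) : #T * a ≤ 2 * Fintype.card α :=
    card_mul_le_two_mul_of_pairwise_card_inter_le hsq T (fun i hi => hA i (hT hi)) (hAA.mono hT)
  have ha : 0 < a := Nat.pos_of_mul_pos_left (Nat.zero_lt_of_lt hsq)
  have hS : S.Finite := by
    by_contra hinf
    obtain ⟨T, hTS, hT⟩ := Set.Infinite.exists_subset_card_eq hinf (2 * Fintype.card α + 1)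
    have := hfinset T hTS
    rw [hT] at this
    nlinarith
  refine ⟨hS, ?_⟩
  rw [Set.ncard_eq_toFinset_card S hS]
  exact hfinset _ (by simp)

def agreementSet {ι R : Type*} [Fintype ι] [Semiring R] [DecidableEq R] (pts : ι → R × R)
    (g : R[X]) : Finset ι :=
  univ.filter fun i => eval (pts i).1 g = (pts i).2

theorem card_agreementSet_inter_le {ι R : Type*} [Fintype ι] [DecidableEq ι] [CommRing R]
    [IsDomain R] [DecidableEq R] {pts : ι → R × R} (hpts : Function.Injective pts) {g h : R[X]}
    (hgh : g ≠ h) : #(agreementSet pts g ∩ agreementSet pts h) ≤ (g - h).natDegree := by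
  set s := agreementSet pts g ∩ agreementSet pts h
  have hinj : Set.InjOn (fun i => (pts i).1) s := by
    intro i hi j hj (hij : (pts i).1 = (pts j).1)
    simp only [s, agreementSet, mem_coe, mem_inter, mem_filter, mem_univ, true_and] at hi hj
    exact hpts (Prod.ext hij (by rw [← hi.1, ← hj.1, hij]))
  rw [← card_image_of_injOn hinj]
  refine card_le_degree_of_subset_roots fun x hx => ?_
  obtain ⟨i, hi, rfl⟩ := mem_image.mp hx
  simp only [s, agreementSet, mem_inter, mem_filter, mem_univ, true_and] at hi
  rw [mem_roots (sub_ne_zero.mpr hgh), IsRoot, eval_sub, hi.1, hi.2, sub_self]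

theorem stmt1_general {F : Type*} [Field F] [DecidableEq F] (b a d : ℕ)
    (hagt : Real.sqrt (2 * d * b) < (a : ℝ))
    (pts : Fin b → F × F) (hdist : Function.Injective pts) :
    let S : Set (Polynomial F) :=
      {g : Polynomial F | g.natDegree ≤ d ∧
        a ≤ (Finset.univ.filter fun i : Fin b =>
              Polynomial.eval (pts i).1 g = (pts i).2).card}
    S.Finite ∧ (S.ncard : ℝ) ≤ 2 * b / a := by
  intro S
  have hsq : 2 * d * Fintype.card (Fin b) < a * a := by
    rw [Fintype.card_fin]
    exact_mod_cast sq (a : ℝ) ▸ Real.lt_sq_of_sqrt_lt hagt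
  obtain ⟨hS, hcard⟩ := ncard_mul_le_two_mul_of_pairwise_card_inter_le (A := agreementSet pts)
    (S := S) hsq (fun g hg => hg.2) fun g hg h hh hgh =>
      (card_agreementSet_inter_le hdist hgh).trans ((natDegree_sub_le g h).trans (max_le hg.1 hh.1))
  refine ⟨hS, ?_⟩
  rw [Fintype.card_fin] at hcard
  rw [le_div_iff₀ ((Real.sqrt_nonneg _).trans_lt hagt)]
  exact_mod_cast hcard

/-- Sudan's list-size bound for Reed–Solomon codes: given `b` distinct pairs in `F × F`
and `a > sqrt(2·d·b)`, there are at most `2·b/a` polynomials of degree at most `d` that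
agree with at least `a` of the pairs. -/
theorem stmt1 {F : Type*} [Field F] [DecidableEq F] (b a d : ℕ)
    (hb : 0 < b) (ha : 0 < a) (hd : 0 < d)
    (hagt : Real.sqrt (2 * d * b) < (a : ℝ))
    (pts : Fin b → F × F) (hdist : Function.Injective pts) :
    let S : Set (Polynomial F) :=
      {g : Polynomial F | g.natDegree ≤ d ∧
        a ≤ (Finset.univ.filter fun i : Fin b =>
              Polynomial.eval (pts i).1 g = (pts i).2).card}
    S.Finite ∧ (S.ncard : ℝ) ≤ 2 * b / a :=
  stmt1_general b a d hagt pts hdist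
end

section
/- Let p = 2^(2·3^α) and m = 3^β for natural numbers α, β. Then the map sending a polynomial v = Σ_{t=0}^{2·3^(α+β)−1} v̂_t x^t ∈ F_2[x]/(x^(2·3^(α+β)) + x^(3^(α+β)) + 1) to the m-tuple whose j-th coordinate (0 ≤ j ≤ 3^β − 1) is Σ_{i=0}^{2·3^α−1} v̂_{i·3^β + j} y^i ∈ F_2[y]/(y^(2·3^α) + y^(3^α) + 1) is an F_p-linear bijection from F_{p^m} to F_p^m, where the F_p-scalar action on F_{p^m} is induced by the field embedding y ↦ x^(3^β). -/
open Polynomial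

noncomputable def bigPoly (γ : ℕ) : Polynomial (ZMod 2) :=
  X ^ (2 * 3 ^ γ) + X ^ (3 ^ γ) + 1

lemma bigPoly_aux (γ : ℕ) :
    (X ^ (3 ^ γ) + 1 : Polynomial (ZMod 2)).degree < ((2 * 3 ^ γ : ℕ) : WithBot ℕ) := by
  have h : (0:ℕ) < 3 ^ γ := pow_pos (by norm_num) γ
  apply lt_of_le_of_lt (Polynomial.degree_add_le _ _)
  apply max_lt
  · rw [Polynomial.degree_X_pow]
    exact_mod_cast by omega
  · apply lt_of_le_of_lt Polynomial.degree_one_le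
    exact_mod_cast by omega

lemma bigPoly_monic (γ : ℕ) : (bigPoly γ).Monic := by
  unfold bigPoly
  rw [add_assoc]
  exact Polynomial.monic_X_pow_add (bigPoly_aux γ)

lemma bigPoly_degree (γ : ℕ) : (bigPoly γ).degree = ((2 * 3 ^ γ : ℕ) : WithBot ℕ) := by
  unfold bigPoly
  rw [add_assoc, Polynomial.degree_add_eq_left_of_degree_lt, Polynomial.degree_X_pow]
  rw [Polynomial.degree_X_pow]
  exact bigPoly_aux γ

lemma mk_injOn (γ : ℕ) {p q : Polynomial (ZMod 2)}
    (hp : p.degree < ((2 * 3 ^ γ : ℕ) : WithBot ℕ))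
    (hq : q.degree < ((2 * 3 ^ γ : ℕ) : WithBot ℕ))
    (h : AdjoinRoot.mk (bigPoly γ) p = AdjoinRoot.mk (bigPoly γ) q) : p = q := by
  rw [AdjoinRoot.mk_eq_mk] at h
  have hd : (p - q).degree < (bigPoly γ).degree := by
    rw [bigPoly_degree]
    exact lt_of_le_of_lt (Polynomial.degree_sub_le p q) (max_lt hp hq)
  have h0 := Polynomial.eq_zero_of_dvd_of_degree_lt h hd
  exact sub_eq_zero.mp h0

lemma sum_range_mul_split {A : Type*} [AddCommMonoid A] (M N : ℕ) (f : ℕ → A) :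
    ∑ t ∈ Finset.range (M * N), f t
      = ∑ j ∈ Finset.range N, ∑ i ∈ Finset.range M, f (i * N + j) := by
  induction M with
  | zero => simp
  | succ M ih =>
    rw [Nat.succ_mul, Finset.sum_range_add, ih, ← Finset.sum_add_distrib]
    exact Finset.sum_congr rfl fun j _ => (Finset.sum_range_succ _ M).symm

lemma idx_unique {n a a' b b' : ℕ} (hb : b < n) (hb' : b' < n)
    (h : a' * n + b' = a * n + b) : a' = a ∧ b' = b := by
  have h1 : b' = b := by
    have h2 : (n * a' + b') % n = (n * a + b) % n := by
      rw [mul_comm n a', mul_comm n a, h]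
    rwa [Nat.mul_add_mod, Nat.mul_add_mod, Nat.mod_eq_of_lt hb, Nat.mod_eq_of_lt hb'] at h2
  subst h1
  have h3 : a' * n = a * n := by omega
  exact ⟨Nat.eq_of_mul_eq_mul_right (by omega) h3, rfl⟩

lemma coeff_sum_C_X {s : Finset ℕ} {a : ℕ → ZMod 2} {t : ℕ} (ht : t ∈ s) :
    (∑ i ∈ s, C (a i) * X ^ i).coeff t = a t := by
  rw [Polynomial.finset_sum_coeff]
  rw [Finset.sum_eq_single t]
  · simp
  · intro b _ hb
    rw [Polynomial.coeff_C_mul, Polynomial.coeff_X_pow, if_neg (Ne.symm hb), mul_zero]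
  · intro h; exact absurd ht h

lemma mk_sum_C_X {R : Type*} [CommRing R] (f : Polynomial R) (s : Finset ℕ) (a : ℕ → R)
    (E : ℕ → ℕ) :
    AdjoinRoot.mk f (∑ t ∈ s, C (a t) * X ^ E t)
      = ∑ t ∈ s, AdjoinRoot.of f (a t) * AdjoinRoot.root f ^ E t := by
  rw [map_sum]
  refine Finset.sum_congr rfl fun t _ => ?_
  rw [map_mul, map_pow, AdjoinRoot.mk_X]
  rfl

lemma degree_sum_lt {ι : Type*} (s : Finset ι) (n : ℕ) (f : ι → Polynomial (ZMod 2))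
    (_hn : 0 < n) (h : ∀ t ∈ s, (f t).degree < ((n : ℕ) : WithBot ℕ)) :
    (∑ t ∈ s, f t).degree < ((n : ℕ) : WithBot ℕ) := by
  apply lt_of_le_of_lt (Polynomial.degree_sum_le _ _)
  rw [Finset.sup_lt_iff (by exact_mod_cast WithBot.bot_lt_coe n)]
  exact h

/-- Let `p = 2^(2·3^α)` and `m = 3^β`, with `F_{p^m} = F₂[x]/(x^(2·3^(α+β)) +
x^(3^(α+β)) + 1)` and `F_p = F₂[y]/(y^(2·3^α) + y^(3^α) + 1)`. The map sending
`v = Σ_t v̂_t x^t` to the `m`-tuple whose `j`-th coordinate is `Σ_i v̂_{i·3^β+j} y^i`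
is an `F_p`-linear bijection from `F_{p^m}` to `F_p^m`, where the `F_p`-scalar action on
`F_{p^m}` is induced by the field embedding `e : y ↦ x^(3^β)`. -/
theorem stmt12 (α β : ℕ)
    (e : AdjoinRoot (bigPoly α) →+* AdjoinRoot (bigPoly (α + β)))
    (he : e (AdjoinRoot.root (bigPoly α)) = (AdjoinRoot.root (bigPoly (α + β))) ^ (3 ^ β))
    (vc : AdjoinRoot (bigPoly (α + β)) → ℕ → ZMod 2)
    (hvc : ∀ v, AdjoinRoot.mk (bigPoly (α + β))
        (∑ t ∈ Finset.range (2 * 3 ^ (α + β)), Polynomial.C (vc v t) * X ^ t) = v)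
    (T : AdjoinRoot (bigPoly (α + β)) → (Fin (3 ^ β) → AdjoinRoot (bigPoly α)))
    (hT : ∀ v j, T v j = AdjoinRoot.mk (bigPoly α)
        (∑ i ∈ Finset.range (2 * 3 ^ α), Polynomial.C (vc v (i * 3 ^ β + j)) * X ^ i)) :
    Function.Bijective T ∧ (∀ u v, T (u + v) = T u + T v) ∧
    (∀ c v j, T (e c * v) j = c * T v j) := by
  have hN0 : 0 < 3 ^ β := pow_pos (by norm_num) β
  have hM0 : 0 < 2 * 3 ^ α := by positivity
  have hMN : 2 * 3 ^ (α + β) = 2 * 3 ^ α * 3 ^ β := by rw [pow_add]; ring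
  have hMN0 : 0 < 2 * 3 ^ α * 3 ^ β := by positivity
  have hlt : ∀ {i jn : ℕ}, i < 2 * 3 ^ α → jn < 3 ^ β →
      i * 3 ^ β + jn < 2 * 3 ^ α * 3 ^ β := by
    intro i jn hi hjn
    calc i * 3 ^ β + jn < i * 3 ^ β + 3 ^ β := Nat.add_lt_add_left hjn _
      _ = (i + 1) * 3 ^ β := by ring
      _ ≤ 2 * 3 ^ α * 3 ^ β := Nat.mul_le_mul_right (3 ^ β) hi
  have hof : ∀ a : ZMod 2, e (AdjoinRoot.of (bigPoly α) a) = AdjoinRoot.of (bigPoly (α + β)) a :=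
    fun a => RingHom.congr_fun
      (RingHom.ext_zmod (e.comp (AdjoinRoot.of (bigPoly α))) (AdjoinRoot.of (bigPoly (α + β)))) a
  have hemk : ∀ a : ℕ → ZMod 2,
      e (AdjoinRoot.mk (bigPoly α) (∑ i ∈ Finset.range (2 * 3 ^ α), Polynomial.C (a i) * X ^ i))
        = ∑ i ∈ Finset.range (2 * 3 ^ α), AdjoinRoot.of (bigPoly (α + β)) (a i) *
            AdjoinRoot.root (bigPoly (α + β)) ^ (i * 3 ^ β) := by
    intro a
    rw [mk_sum_C_X (bigPoly α) (Finset.range (2 * 3 ^ α)) a (fun i => i), map_sum]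
    refine Finset.sum_congr rfl fun i _ => ?_
    rw [map_mul, map_pow, he, hof, ← pow_mul, Nat.mul_comm (3 ^ β) i]
  have hvc' : ∀ v, AdjoinRoot.mk (bigPoly (α + β))
      (∑ t ∈ Finset.range (2 * 3 ^ α * 3 ^ β), Polynomial.C (vc v t) * X ^ t) = v := by
    intro v
    have h := hvc v
    rwa [hMN] at h
  have hPdeg : ∀ v, (∑ t ∈ Finset.range (2 * 3 ^ α * 3 ^ β),
      Polynomial.C (vc v t) * X ^ t).degree < ((2 * 3 ^ α * 3 ^ β : ℕ) : WithBot ℕ) := by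
    intro v
    refine degree_sum_lt _ _ _ hMN0 fun t ht => ?_
    refine lt_of_le_of_lt (Polynomial.degree_C_mul_X_pow_le _ _) ?_
    exact_mod_cast Finset.mem_range.mp ht
  set U : (Fin (3 ^ β) → AdjoinRoot (bigPoly α)) → AdjoinRoot (bigPoly (α + β)) :=
    fun w => ∑ j : Fin (3 ^ β), e (w j) * AdjoinRoot.root (bigPoly (α + β)) ^ (j : ℕ) with hU
  have claim1 : ∀ v, U (T v) = v := by
    intro v
    have step1 : U (T v) = ∑ j ∈ Finset.range (3 ^ β),
        e (AdjoinRoot.mk (bigPoly α)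
          (∑ i ∈ Finset.range (2 * 3 ^ α), Polynomial.C (vc v (i * 3 ^ β + j)) * X ^ i)) *
          AdjoinRoot.root (bigPoly (α + β)) ^ j := by
      rw [hU]
      rw [← Fin.sum_univ_eq_sum_range (fun j => e (AdjoinRoot.mk (bigPoly α)
          (∑ i ∈ Finset.range (2 * 3 ^ α), Polynomial.C (vc v (i * 3 ^ β + j)) * X ^ i)) *
          AdjoinRoot.root (bigPoly (α + β)) ^ j) (3 ^ β)]
      exact Finset.sum_congr rfl fun j _ => by rw [hT]
    rw [step1]
    have step2 : ∀ j ∈ Finset.range (3 ^ β),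
        e (AdjoinRoot.mk (bigPoly α)
          (∑ i ∈ Finset.range (2 * 3 ^ α), Polynomial.C (vc v (i * 3 ^ β + j)) * X ^ i)) *
          AdjoinRoot.root (bigPoly (α + β)) ^ j
        = ∑ i ∈ Finset.range (2 * 3 ^ α),
            AdjoinRoot.of (bigPoly (α + β)) (vc v (i * 3 ^ β + j)) *
            AdjoinRoot.root (bigPoly (α + β)) ^ (i * 3 ^ β + j) := by
      intro j _
      rw [hemk, Finset.sum_mul]
      exact Finset.sum_congr rfl fun i _ => by rw [mul_assoc, ← pow_add]
    rw [Finset.sum_congr rfl step2,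
      ← sum_range_mul_split (2 * 3 ^ α) (3 ^ β) (fun t =>
        AdjoinRoot.of (bigPoly (α + β)) (vc v t) * AdjoinRoot.root (bigPoly (α + β)) ^ t),
      ← mk_sum_C_X (bigPoly (α + β)) (Finset.range (2 * 3 ^ α * 3 ^ β)) (vc v) (fun t => t)]
    exact hvc' v
  have claim2 : ∀ w, T (U w) = w := by
    intro w
    set p : Fin (3 ^ β) → Polynomial (ZMod 2) :=
      fun j => AdjoinRoot.modByMonicHom (bigPoly_monic α) (w j) with hpdef
    have hp1 : ∀ j, AdjoinRoot.mk (bigPoly α) (p j) = w j := fun j =>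
      AdjoinRoot.mk_leftInverse (bigPoly_monic α) (w j)
    have hp2 : ∀ j, (p j).degree < ((2 * 3 ^ α : ℕ) : WithBot ℕ) := by
      intro j
      obtain ⟨q, hq⟩ := AdjoinRoot.mk_surjective (w j)
      rw [hpdef]
      simp only [← hq, AdjoinRoot.modByMonicHom_mk]
      have hd := Polynomial.degree_modByMonic_lt q (bigPoly_monic α)
      rwa [bigPoly_degree] at hd
    have hp3 : ∀ j, p j = ∑ i ∈ Finset.range (2 * 3 ^ α),
        Polynomial.C ((p j).coeff i) * X ^ i := by
      intro j
      have hnd : (p j).natDegree < 2 * 3 ^ α := by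
        by_cases h0 : p j = 0
        · rw [h0]; simp only [Polynomial.natDegree_zero]; exact hM0
        · exact (Polynomial.natDegree_lt_iff_degree_lt h0).mpr (hp2 j)
      conv_lhs => rw [Polynomial.as_sum_range' (p j) (2 * 3 ^ α) hnd]
      exact Finset.sum_congr rfl fun i _ => (Polynomial.C_mul_X_pow_eq_monomial).symm
    set Q : Polynomial (ZMod 2) := ∑ j' : Fin (3 ^ β), ∑ i' ∈ Finset.range (2 * 3 ^ α),
      Polynomial.C ((p j').coeff i') * X ^ (i' * 3 ^ β + (j' : ℕ)) with hQdef
    have hQdeg : Q.degree < ((2 * 3 ^ α * 3 ^ β : ℕ) : WithBot ℕ) := by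
      rw [hQdef]
      refine degree_sum_lt _ _ _ hMN0 fun j' _ => ?_
      refine degree_sum_lt _ _ _ hMN0 fun i' hi' => ?_
      refine lt_of_le_of_lt (Polynomial.degree_C_mul_X_pow_le _ _) ?_
      exact_mod_cast hlt (Finset.mem_range.mp hi') j'.isLt
    have hQmk : AdjoinRoot.mk (bigPoly (α + β)) Q = U w := by
      rw [hQdef, map_sum, hU]
      refine Finset.sum_congr rfl fun j' _ => ?_
      rw [mk_sum_C_X (bigPoly (α + β)) (Finset.range (2 * 3 ^ α))
        (fun i' => (p j').coeff i') (fun i' => i' * 3 ^ β + (j' : ℕ))]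
      rw [← hp1 j']
      conv_rhs => rw [hp3 j']
      rw [hemk, Finset.sum_mul]
      exact Finset.sum_congr rfl fun i _ => by rw [mul_assoc, ← pow_add]
    have hQP : (∑ t ∈ Finset.range (2 * 3 ^ α * 3 ^ β),
        Polynomial.C (vc (U w) t) * X ^ t) = Q := by
      apply mk_injOn (α + β)
      · rw [hMN]; exact hPdeg (U w)
      · rw [hMN]; exact hQdeg
      · rw [hvc' (U w), hQmk]
    funext j
    rw [hT]
    have hco : ∀ i ∈ Finset.range (2 * 3 ^ α),
        vc (U w) (i * 3 ^ β + (j : ℕ)) = (p j).coeff i := by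
      intro i hi
      rw [Finset.mem_range] at hi
      have h1 : (∑ t ∈ Finset.range (2 * 3 ^ α * 3 ^ β),
          Polynomial.C (vc (U w) t) * X ^ t).coeff (i * 3 ^ β + (j : ℕ))
          = vc (U w) (i * 3 ^ β + (j : ℕ)) :=
        coeff_sum_C_X (Finset.mem_range.mpr (hlt hi j.isLt))
      rw [← h1, hQP, hQdef, Polynomial.finset_sum_coeff]
      rw [Finset.sum_eq_single j]
      · rw [Polynomial.finset_sum_coeff, Finset.sum_eq_single i]
        · rw [Polynomial.coeff_C_mul, Polynomial.coeff_X_pow, if_pos rfl, mul_one]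
        · intro i' _ hne
          rw [Polynomial.coeff_C_mul, Polynomial.coeff_X_pow, if_neg, mul_zero]
          intro hEq
          exact hne (idx_unique j.isLt j.isLt hEq).1.symm
        · intro h; exact absurd (Finset.mem_range.mpr hi) h
      · intro j' _ hne
        rw [Polynomial.finset_sum_coeff]
        refine Finset.sum_eq_zero fun i' _ => ?_
        rw [Polynomial.coeff_C_mul, Polynomial.coeff_X_pow, if_neg, mul_zero]
        intro hEq
        exact hne (Fin.ext (idx_unique j.isLt j'.isLt hEq.symm).2)
      · intro h; exact absurd (Finset.mem_univ j) h
    rw [Finset.sum_congr rfl fun i hi => by rw [hco i hi]]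
    rw [← hp3 j, hp1 j]
  have hUadd : ∀ w w', U (w + w') = U w + U w' := by
    intro w w'
    simp only [hU, Pi.add_apply, map_add, add_mul, Finset.sum_add_distrib]
  have hUsmul : ∀ (c : AdjoinRoot (bigPoly α)) w,
      U (fun j => c * w j) = e c * U w := by
    intro c w
    simp only [hU, map_mul, Finset.mul_sum, mul_assoc]
  refine ⟨Function.bijective_iff_has_inverse.mpr ⟨U, claim1, claim2⟩, ?_, ?_⟩
  · intro u v
    have h : u + v = U (T u + T v) := by rw [hUadd, claim1, claim1]
    rw [h, claim2]
  · intro c v j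
    have h : e c * v = U (fun j => c * T v j) := by rw [hUsmul, claim1]
    rw [h]
    exact congrFun (claim2 _) j
end

section
/- Let α ≥ 1 be a real number, β = 2α, and let n_0 ≥ 2. Define sequences n_{i+1} = n_i^β and T_0 = 2^(α·n_0), T_{i+1} = T_i^α. Then for all i ≥ 0, T_i ≤ 2^(α^i·α·n_0) and n_i = n_0^((2α)^i), and hence log(T_i)/log(n_i) ≤ α·n_0/(2^i · log n_0). In particular, if t ≥ log_2(α·n_0/log_2 n_0), then T_t ≤ n_t. -/
open Real

/-! Both recursions become linear after taking `log₂`: `log₂ T_i = α^i · α n₀` and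
`log₂ n_i = (2α)^i · log₂ n₀`, so their ratio is `α n₀ / (2^i log₂ n₀)`, and `T_t ≤ n_t`
amounts to `α n₀ ≤ 2^t log₂ n₀`, which is the hypothesis on `t` after exponentiating. -/

theorem eq_rpow_pow_of_succ_eq_rpow {x : ℕ → ℝ} {c : ℝ} (hx0 : 0 ≤ x 0)
    (hx : ∀ i, x (i + 1) = x i ^ c) (i : ℕ) : x i = x 0 ^ (c ^ i) := by
  induction i with
  | zero => simp
  | succ i ih => rw [hx i, ih, ← rpow_mul hx0, pow_succ]

theorem le_two_pow_mul_of_logb_div_le {x L : ℝ} (hx : 0 < x) (hL : 0 < L) {t : ℕ}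
    (h : logb 2 (x / L) ≤ t) : x ≤ 2 ^ t * L := by
  rw [logb_le_iff_le_rpow one_lt_two (div_pos hx hL), rpow_natCast, div_le_iff₀ hL] at h
  exact h

/-- Quantitative analysis of the bootstrapping recursion: with `n_{i+1} = n_i^(2α)`,
`T_0 = 2^(α n_0)` and `T_{i+1} = T_i^α` (for a real `α ≥ 1` and `n_0 ≥ 2`), one has
`T_i ≤ 2^(α^i·α·n_0)` and `n_i = n_0^((2α)^i)`, hence
`log T_i / log n_i ≤ α·n_0/(2^i log n_0)`; in particular `T_t ≤ n_t` once
`t ≥ log₂(α·n_0/log₂ n_0)`. -/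
theorem stmt16 (a : ℝ) (ha : 1 ≤ a) (n T : ℕ → ℝ) (hn0 : 2 ≤ n 0)
    (hn : ∀ i, n (i + 1) = n i ^ (2 * a))
    (hT0 : T 0 = 2 ^ (a * n 0))
    (hT : ∀ i, T (i + 1) = T i ^ a) :
    (∀ i : ℕ, T i ≤ 2 ^ (a ^ i * a * n 0)) ∧
    (∀ i : ℕ, n i = n 0 ^ ((2 * a) ^ i)) ∧
    (∀ i : ℕ, Real.logb 2 (T i) / Real.logb 2 (n i)
        ≤ a * n 0 / (2 ^ i * Real.logb 2 (n 0))) ∧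
    (∀ t : ℕ, Real.logb 2 (a * n 0 / Real.logb 2 (n 0)) ≤ (t : ℝ) → T t ≤ n t) := by
  have ha0 : 0 < a := by linarith
  have hn0pos : 0 < n 0 := by linarith
  have hL : 0 < logb 2 (n 0) := logb_pos one_lt_two (by linarith)
  have hTeq i : T i = 2 ^ (a ^ i * a * n 0) := by
    rw [eq_rpow_pow_of_succ_eq_rpow (hT0 ▸ by positivity) hT, hT0, ← rpow_mul zero_le_two]
    ring_nf
  have hneq := eq_rpow_pow_of_succ_eq_rpow hn0pos.le hn
  have hlogT i : logb 2 (T i) = a ^ i * (a * n 0) := by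
    rw [hTeq, logb_rpow two_pos (by norm_num), mul_assoc]
  have hlogn i : logb 2 (n i) = a ^ i * (2 ^ i * logb 2 (n 0)) := by
    rw [hneq, logb_rpow_eq_mul_logb_of_pos hn0pos, mul_pow, mul_left_comm, mul_assoc]
  refine ⟨fun i => (hTeq i).le, hneq, fun i => ?_, fun t ht => ?_⟩
  · rw [hlogT, hlogn, mul_div_mul_left _ _ (pow_ne_zero i ha0.ne')]
  · rw [← logb_le_logb one_lt_two (by rw [hTeq]; positivity) (by rw [hneq]; positivity),
      hlogT, hlogn]
    exact mul_le_mul_of_nonneg_left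
      (le_two_pow_mul_of_logb_div_le (by positivity) hL ht) (by positivity)
end
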